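/- Let M be a smooth manifold and let 𝓕 be an admissible sheaf of local vector fields on M. If a connected open set U ⊆ M is 𝓕-special for all its points, then: (1) for every p ∈ U and every 𝔤_* ∈ 𝔊^𝓕_p there exists a unique K ∈ 𝓕(U) with germ_p(K) = 𝔤_*; and (2) for every connected open subset V ⊆ U and every K ∈ 𝓕(V) there exists a unique K̃ ∈ 𝓕(U) with K̃|_V = K. -/

import Mathlib

open Set Manifold Topology

noncomputable section

variable {E : Type*} [NormedAddCommGroup E] [NormedSpace ℝ E]
  {H : Type*} [TopologicalSpace H]

/-- A (raw) vector field on the manifold `M`, given by a choice of tangent vector at every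
point.  A *local* vector field defined on an open set `U ⊆ M` is represented by such a global
assignment, where only the values on `U` are relevant. -/
abbrev VF (I : ModelWithCorners ℝ E H) (M : Type*) [TopologicalSpace M] [ChartedSpace H M] :
    Type _ :=
  (x : M) → TangentSpace I x

variable (I : ModelWithCorners ℝ E H) (M : Type*) [TopologicalSpace M] [ChartedSpace H M]
  [IsManifold I (⊤ : ℕ∞) M]

/-- Smoothness (`C^∞`) of a vector field on a subset `U` of `M`, as smoothness of the
corresponding section of the tangent bundle. -/
def IsSmoothVFOn (X : VF I M) (U : Set M) : Prop :=
  ContMDiffOn I I.tangent (⊤ : ℕ∞) (fun x => (⟨x, X x⟩ : TangentBundle I M)) U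

/-- A sheaf of local vector fields on the manifold `M`: to every connected open set `U ⊆ M` it
assigns a linear subspace `carrier U` of the smooth vector fields on `U` (represented by global
assignments of tangent vectors, two of which describe the same local field on `U` iff they agree
on `U`), closed under restriction to connected open subsets and satisfying the gluing axiom. -/
structure VFSheaf where
  carrier : Set M → Set (VF I M)
  smooth_mem : ∀ U, IsOpen U → IsConnected U → ∀ X ∈ carrier U, IsSmoothVFOn I M X U
  zero_mem : ∀ U, IsOpen U → IsConnected U → (0 : VF I M) ∈ carrier U
  add_mem : ∀ U, IsOpen U → IsConnected U → ∀ X ∈ carrier U, ∀ Y ∈ carrier U, X + Y ∈ carrier U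
  smul_mem : ∀ U, IsOpen U → IsConnected U → ∀ (c : ℝ), ∀ X ∈ carrier U, c • X ∈ carrier U
  congr_mem : ∀ U, IsOpen U → IsConnected U → ∀ X ∈ carrier U, ∀ Y : VF I M,
    (∀ x ∈ U, Y x = X x) → Y ∈ carrier U
  restrict_mem : ∀ U, IsOpen U → IsConnected U → ∀ V, IsOpen V → IsConnected V → V ⊆ U →
    ∀ X ∈ carrier U, X ∈ carrier V
  glue_mem : ∀ U, IsOpen U → IsConnected U → ∀ S : Set (Set M),
    (∀ V ∈ S, IsOpen V ∧ IsConnected V) → U = ⋃₀ S → ∀ X : VF I M, IsSmoothVFOn I M X U →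
    (∀ V ∈ S, X ∈ carrier V) → X ∈ carrier U

variable {I M}

/-- The unique continuation property for a sheaf of local vector fields: a field of the sheaf
on a connected open set vanishing on some non-empty open subset vanishes identically. -/
def VFSheaf.UniqueContinuation (F : VFSheaf I M) : Prop :=
  ∀ U, IsOpen U → IsConnected U → ∀ X ∈ F.carrier U,
    (∃ V : Set M, V.Nonempty ∧ IsOpen V ∧ V ⊆ U ∧ ∀ x ∈ V, X x = 0) → ∀ x ∈ U, X x = 0

variable (I M) in
/-- Restriction of global tangent-vector assignments to a subset `U`, as a linear map. -/
def resVF (U : Set M) : VF I M →ₗ[ℝ] ((x : U) → TangentSpace I (x : M)) where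
  toFun X := fun x => X x
  map_add' _ _ := rfl
  map_smul' _ _ := rfl

/-- The dimension (as a cardinal) of the space `𝓕(U)` of local fields of the sheaf `F` on `U`,
computed as the rank of the space of restrictions to `U` of members of `F.carrier U`. -/
def fdim (F : VFSheaf I M) (U : Set M) : Cardinal :=
  Module.rank ℝ ↥(Submodule.span ℝ (resVF I M U '' F.carrier U))

/-- A sheaf of local vector fields has bounded rank if the dimensions of the spaces `𝓕(U)`,
`U` connected open, are uniformly bounded. -/
def VFSheaf.BoundedRank (F : VFSheaf I M) : Prop :=
  ∃ N : ℕ, ∀ U : Set M, IsOpen U → IsConnected U → fdim F U ≤ (N : Cardinal)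

/-- A sheaf of local vector fields is admissible if it has the unique continuation property
and bounded rank. -/
def VFSheaf.Admissible (F : VFSheaf I M) : Prop :=
  F.UniqueContinuation ∧ F.BoundedRank

/-- `κ^𝓕_p`: the supremum (= maximum) of `dim 𝓕(U)` over connected open neighbourhoods `U`
of `p`. -/
def kappa (F : VFSheaf I M) (p : M) : Cardinal :=
  ⨆ U : {U : Set M // IsOpen U ∧ IsConnected U ∧ p ∈ U}, fdim F (U : Set M)

/-- A sheaf of local vector fields is regular if `p ↦ κ^𝓕_p` is constant on `M`. -/
def VFSheaf.Regular (F : VFSheaf I M) : Prop :=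
  ∀ p q : M, kappa F p = kappa F q

section Germs

variable (I M) in
/-- The subspace of tangent-vector assignments vanishing on some connected open neighbourhood
of `p`; the quotient by this subspace is the space of germs at `p`. -/
def germNull [LocallyConnectedSpace M] (p : M) : Submodule ℝ (VF I M) where
  carrier := {X | ∃ V : Set M, IsOpen V ∧ IsConnected V ∧ p ∈ V ∧ ∀ x ∈ V, X x = 0}
  zero_mem' :=
    ⟨connectedComponentIn univ p, isOpen_univ.connectedComponentIn,
      isConnected_connectedComponentIn_iff.mpr (mem_univ p),
      mem_connectedComponentIn (mem_univ p), fun _ _ => rfl⟩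
  add_mem' := by
    rintro X Y ⟨V₁, hV₁o, hV₁c, hpV₁, hX⟩ ⟨V₂, hV₂o, hV₂c, hpV₂, hY⟩
    refine ⟨connectedComponentIn (V₁ ∩ V₂) p, (hV₁o.inter hV₂o).connectedComponentIn,
      isConnected_connectedComponentIn_iff.mpr ⟨hpV₁, hpV₂⟩,
      mem_connectedComponentIn ⟨hpV₁, hpV₂⟩, fun x hx => ?_⟩
    have hx' := connectedComponentIn_subset (V₁ ∩ V₂) p hx
    show X x + Y x = 0
    rw [hX x hx'.1, hY x hx'.2, add_zero]
  smul_mem' := by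
    rintro c X ⟨V, hVo, hVc, hpV, hX⟩
    exact ⟨V, hVo, hVc, hpV, fun x hx => by show c • X x = 0; rw [hX x hx, smul_zero]⟩

variable (I M) in
/-- The space of germs at `p` of (arbitrary) local vector fields on `M`. -/
abbrev GermSpace [LocallyConnectedSpace M] (p : M) : Type _ :=
  VF I M ⧸ germNull I M p

variable (I M) in
/-- The germ at `p` of a local vector field, as a linear map. -/
def germAt [LocallyConnectedSpace M] (p : M) : VF I M →ₗ[ℝ] GermSpace I M p :=
  (germNull I M p).mkQ

/-- `𝔊^𝓕_p`: the space of germs at `p` of local `𝓕`-fields of the sheaf `F`, i.e. germs at `p`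
of fields `K ∈ 𝓕(U)` with `U` a connected open neighbourhood of `p`. -/
def stalk [LocallyConnectedSpace M] (F : VFSheaf I M) (p : M) :
    Submodule ℝ (GermSpace I M p) :=
  Submodule.span ℝ {g | ∃ U : Set M, ∃ X : VF I M,
    IsOpen U ∧ IsConnected U ∧ p ∈ U ∧ X ∈ F.carrier U ∧ g = germAt I M p X}

/-- A connected open set `U ∋ p` is `𝓕`-special for `p` if the (linear) germ map
`𝓕(U) → 𝔊^𝓕_p` is a linear isomorphism, i.e. it is injective (fields in `𝓕(U)` with the same
germ at `p` agree on `U`) and surjective onto the space of `𝓕`-germs at `p`. -/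
def IsSpecial [LocallyConnectedSpace M] (F : VFSheaf I M) (U : Set M) (p : M) : Prop :=
  IsOpen U ∧ IsConnected U ∧ p ∈ U ∧
    (∀ K₁ ∈ F.carrier U, ∀ K₂ ∈ F.carrier U,
      germAt I M p K₁ = germAt I M p K₂ → ∀ x ∈ U, K₁ x = K₂ x) ∧
    (∀ g ∈ stalk F p, ∃ K ∈ F.carrier U, germAt I M p K = g)

/-- A transport of `𝓕`-germs along the curve `γ : [a,b] → M`: a family of germs
`g t ∈ 𝔊^𝓕_{γ t}` which is locally induced by a single local field of the sheaf `F`. -/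
def IsTransport [LocallyConnectedSpace M] (F : VFSheaf I M) (a b : ℝ) (γ : ℝ → M)
    (g : (t : ℝ) → GermSpace I M (γ t)) : Prop :=
  ∀ t₀ ∈ Icc a b, ∃ ε > (0 : ℝ), ∃ U : Set M, ∃ K : VF I M,
    IsOpen U ∧ IsConnected U ∧ K ∈ F.carrier U ∧
    ∀ t ∈ Ioo (t₀ - ε) (t₀ + ε) ∩ Icc a b, γ t ∈ U ∧ g t = germAt I M (γ t) K

end Germs

/-!
Part (1) is specialness at `p` read as existence plus injectivity. For (2), pick `p ∈ V`: the germ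
of `K` at `p` is an `𝓕`-germ, so specialness at `p` yields `K' ∈ 𝓕(U)` with the same germ; then
`K'|_V - K ∈ 𝓕(V)` vanishes near `p`, hence on all of `V` by unique continuation. Two extensions
agree on `V`, so they have the same germ at `p` and therefore agree on `U`.
-/

namespace VFSheaf

variable (F : VFSheaf I M)

theorem sub_mem {U : Set M} (hU : IsOpen U) (hUc : IsConnected U) {X Y : VF I M}
    (hX : X ∈ F.carrier U) (hY : Y ∈ F.carrier U) : X - Y ∈ F.carrier U := by
  have h := F.add_mem U hU hUc X hX _ (F.smul_mem U hU hUc (-1) Y hY)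
  rwa [neg_one_smul, ← sub_eq_add_neg] at h

end VFSheaf

section Germs

variable [LocallyConnectedSpace M]

omit [IsManifold I (⊤ : ℕ∞) M] in
theorem germAt_eq_germAt_iff {p : M} {X Y : VF I M} :
    germAt I M p X = germAt I M p Y ↔
      ∃ W : Set M, IsOpen W ∧ IsConnected W ∧ p ∈ W ∧ ∀ x ∈ W, X x = Y x := by
  simp only [germAt, Submodule.mkQ_apply, Submodule.Quotient.eq]
  refine exists_congr fun W => and_congr_right' <| and_congr_right' <| and_congr_right' ?_
  exact forall₂_congr fun x _ => sub_eq_zero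

theorem germAt_mem_stalk (F : VFSheaf I M) {V : Set M} (hV : IsOpen V) (hVc : IsConnected V)
    {p : M} (hp : p ∈ V) {X : VF I M} (hX : X ∈ F.carrier V) : germAt I M p X ∈ stalk F p :=
  Submodule.subset_span ⟨V, X, hV, hVc, hp, hX, rfl⟩

theorem VFSheaf.UniqueContinuation.eq_of_germAt_eq {F : VFSheaf I M} (hF : F.UniqueContinuation)
    {V : Set M} (hV : IsOpen V) (hVc : IsConnected V) {X Y : VF I M} (hX : X ∈ F.carrier V)
    (hY : Y ∈ F.carrier V) {p : M} (hp : p ∈ V) (h : germAt I M p X = germAt I M p Y) :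
    ∀ x ∈ V, X x = Y x := by
  obtain ⟨W, hW, -, hpW, hXY⟩ := germAt_eq_germAt_iff.mp h
  have hzero := hF V hV hVc (X - Y) (F.sub_mem hV hVc hX hY)
    ⟨connectedComponentIn (W ∩ V) p, ⟨p, mem_connectedComponentIn ⟨hpW, hp⟩⟩,
      (hW.inter hV).connectedComponentIn,
      (connectedComponentIn_subset _ _).trans inter_subset_right,
      fun x hx => sub_eq_zero.mpr (hXY x (connectedComponentIn_subset _ _ hx).1)⟩
  exact fun x hx => sub_eq_zero.mp (hzero x hx)

namespace IsSpecial

variable {F : VFSheaf I M} {U : Set M} {p : M}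

theorem eq_of_germAt_eq (hsp : IsSpecial F U p) {K₁ K₂ : VF I M} (h₁ : K₁ ∈ F.carrier U)
    (h₂ : K₂ ∈ F.carrier U) (h : germAt I M p K₁ = germAt I M p K₂) : ∀ x ∈ U, K₁ x = K₂ x :=
  hsp.2.2.2.1 K₁ h₁ K₂ h₂ h

theorem exists_germAt_eq (hsp : IsSpecial F U p) {g : GermSpace I M p} (hg : g ∈ stalk F p) :
    ∃ K ∈ F.carrier U, germAt I M p K = g :=
  hsp.2.2.2.2 g hg

theorem eq_of_eq_on {V : Set M} (hsp : IsSpecial F U p) (hV : IsOpen V) (hVc : IsConnected V)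
    (hpV : p ∈ V) {K₁ K₂ : VF I M} (h₁ : K₁ ∈ F.carrier U) (h₂ : K₂ ∈ F.carrier U)
    (h : ∀ x ∈ V, K₁ x = K₂ x) : ∀ x ∈ U, K₁ x = K₂ x :=
  hsp.eq_of_germAt_eq h₁ h₂ (germAt_eq_germAt_iff.mpr ⟨V, hV, hVc, hpV, h⟩)

theorem exists_extension (hF : F.UniqueContinuation) (hsp : IsSpecial F U p) {V : Set M}
    (hV : IsOpen V) (hVc : IsConnected V) (hVU : V ⊆ U) (hpV : p ∈ V) {K : VF I M}
    (hK : K ∈ F.carrier V) : ∃ K' ∈ F.carrier U, ∀ x ∈ V, K' x = K x := by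
  obtain ⟨K', hK', hgerm⟩ := hsp.exists_germAt_eq (germAt_mem_stalk F hV hVc hpV hK)
  have hK'V : K' ∈ F.carrier V := F.restrict_mem U hsp.1 hsp.2.1 V hV hVc hVU K' hK'
  exact ⟨K', hK', hF.eq_of_germAt_eq hV hVc hK'V hK hpV hgerm⟩

end IsSpecial

end Germs

theorem statement8_general [LocallyConnectedSpace M] (F : VFSheaf I M) (hF : F.Admissible)
    (U : Set M) (hsp : ∀ p ∈ U, IsSpecial F U p) :
    (∀ p ∈ U, ∀ g ∈ stalk F p,
      (∃ K ∈ F.carrier U, germAt I M p K = g) ∧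
      (∀ K₁ ∈ F.carrier U, ∀ K₂ ∈ F.carrier U,
        germAt I M p K₁ = g → germAt I M p K₂ = g → ∀ x ∈ U, K₁ x = K₂ x)) ∧
    (∀ V : Set M, IsOpen V → IsConnected V → V ⊆ U → ∀ K ∈ F.carrier V,
      (∃ K' ∈ F.carrier U, ∀ x ∈ V, K' x = K x) ∧
      (∀ K₁ ∈ F.carrier U, ∀ K₂ ∈ F.carrier U,
        (∀ x ∈ V, K₁ x = K x) → (∀ x ∈ V, K₂ x = K x) → ∀ x ∈ U, K₁ x = K₂ x)) := by
  refine ⟨fun p hp g hg => ⟨(hsp p hp).exists_germAt_eq hg, ?_⟩, fun V hV hVc hVU K hK => ?_⟩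
  · intro K₁ h₁ K₂ h₂ e₁ e₂
    exact (hsp p hp).eq_of_germAt_eq h₁ h₂ (e₁.trans e₂.symm)
  · obtain ⟨p, hpV⟩ := hVc.nonempty
    have hsp := hsp p (hVU hpV)
    refine ⟨hsp.exists_extension hF.1 hV hVc hVU hpV hK, fun K₁ h₁ K₂ h₂ e₁ e₂ => ?_⟩
    exact hsp.eq_of_eq_on hV hVc hpV h₁ h₂ fun x hx => (e₁ x hx).trans (e₂ x hx).symm

/-- If the connected open set `U` is `𝓕`-special for all its points then
(1) every `𝓕`-germ at a point of `U` is the germ of a unique field of `𝓕(U)`, and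
(2) every field of `𝓕(V)`, `V ⊆ U` connected open, extends uniquely to a field of `𝓕(U)`
(uniqueness of a local field on `U` meaning uniqueness of its values on `U`). -/
theorem statement8 [LocallyConnectedSpace M] (F : VFSheaf I M) (hF : F.Admissible)
    (U : Set M) (hU : IsOpen U) (hUc : IsConnected U)
    (hsp : ∀ p ∈ U, IsSpecial F U p) :
    (∀ p ∈ U, ∀ g ∈ stalk F p,
      (∃ K ∈ F.carrier U, germAt I M p K = g) ∧
      (∀ K₁ ∈ F.carrier U, ∀ K₂ ∈ F.carrier U,
        germAt I M p K₁ = g → germAt I M p K₂ = g → ∀ x ∈ U, K₁ x = K₂ x)) ∧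
    (∀ V : Set M, IsOpen V → IsConnected V → V ⊆ U → ∀ K ∈ F.carrier V,
      (∃ K' ∈ F.carrier U, ∀ x ∈ V, K' x = K x) ∧
      (∀ K₁ ∈ F.carrier U, ∀ K₂ ∈ F.carrier U,
        (∀ x ∈ V, K₁ x = K x) → (∀ x ∈ V, K₂ x = K x) → ∀ x ∈ U, K₁ x = K₂ x)) :=
  statement8_general F hF U hsp
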